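/- Let X be a δ-hyperbolic length space, Y and Z subsets of X, and x ∈ X. If for all y ∈ Y and z ∈ Z one has (y|z)_x ≤ α, then for all y' in the hull of Y and all z' in the hull of Z, (y'|z')_x ≤ α + 3δ. -/
import Mathlib


open Metric Set

/-- The Gromov product of `x` and `y` seen from `z`. -/
noncomputable def gp {X : Type*} [MetricSpace X] (x y z : X) : Real :=
  (dist x z + dist y z - dist x y) / 2

/-- `X` is `δ`-hyperbolic: four-point condition via Gromov products. -/
def IsHyp (X : Type*) [MetricSpace X] (δ : Real) : Prop :=
  ∀ x y z t : X, gp x z t ≥ min (gp x y t) (gp y z t) - δ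

/-- `γ` restricted to `I` is a `(1,l)`-quasi-geodesic parametrized by arclength. -/
def IsQG {X : Type*} [MetricSpace X] (l : Real) (I : Set Real) (γ : Real → X) : Prop :=
  ∀ s ∈ I, ∀ t ∈ I, dist (γ s) (γ t) ≤ |s - t| ∧ |s - t| ≤ dist (γ s) (γ t) + l

/-- `X` is a length space: any two points are joined by `(1,l)`-quasi-geodesics for all `l > 0`. -/
def IsLengthLike (X : Type*) [MetricSpace X] : Prop :=
  ∀ x y : X, ∀ l > (0:Real), ∃ b ≥ (0:Real), ∃ γ : Real → X,
    γ 0 = x ∧ γ b = y ∧ IsQG l (Icc 0 b) γ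

/-- The hull of `Y`: the union of all `(1,δ)`-quasi-geodesics joining two points of `Y`. -/
def Hull {X : Type*} [MetricSpace X] (δ : Real) (Y : Set X) : Set X :=
  {p | ∃ a b : Real, ∃ γ : Real → X, a ≤ b ∧ γ a ∈ Y ∧ γ b ∈ Y ∧
    IsQG δ (Icc a b) γ ∧ ∃ s ∈ Icc a b, γ s = p}

/-- Key step: a point of the hull of `Y` has Gromov product with any fixed `w`
(seen from `x`) at most `β + 3δ/2`, if all points of `Y` have product at most `β`. -/
lemma gp_hull_le {X : Type*} [MetricSpace X] {δ β : Real}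
    (hX : IsHyp X δ) {Y : Set X} {w x : X}
    (h : ∀ y ∈ Y, gp y w x ≤ β) :
    ∀ p ∈ Hull δ Y, gp p w x ≤ β + 3 * δ / 2 := by
  rintro p ⟨A, B, γ, hAB, hY1, hY2, hQG, s, hs, rfl⟩
  have hA : A ∈ Icc A B := ⟨le_refl A, hAB⟩
  have hB : B ∈ Icc A B := ⟨hAB, le_refl B⟩
  -- quasi-geodesic estimates
  have h1 : dist (γ A) (γ s) ≤ s - A := by
    have := (hQG A hA s hs).1
    rwa [abs_sub_comm, abs_of_nonneg (by linarith [hs.1])] at this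
  have h2 : dist (γ s) (γ B) ≤ B - s := by
    have := (hQG s hs B hB).1
    rwa [abs_sub_comm, abs_of_nonneg (by linarith [hs.2])] at this
  have h3 : B - A ≤ dist (γ A) (γ B) + δ := by
    have := (hQG A hA B hB).2
    rwa [abs_sub_comm, abs_of_nonneg (by linarith)] at this
  have hQ : dist (γ A) (γ s) + dist (γ s) (γ B) ≤ dist (γ A) (γ B) + δ := by
    linarith
  -- hyperbolicity for the quadruple (γ A, γ s, γ B, x)
  have hyp := hX (γ A) (γ s) (γ B) x
  have hbA := h (γ A) hY1
  have hbB := h (γ B) hY2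
  have tA : dist (γ s) w ≥ dist (γ A) w - dist (γ A) (γ s) := by
    have := dist_triangle (γ A) (γ s) w
    have := dist_triangle (γ A) w (γ s)
    linarith [dist_triangle (γ A) (γ s) w]
  have tB : dist (γ s) w ≥ dist (γ B) w - dist (γ s) (γ B) := by
    have h' := dist_triangle (γ B) (γ s) w
    rw [dist_comm (γ B) (γ s)] at h'
    linarith
  rcases le_or_gt (gp (γ A) (γ s) x) (gp (γ s) (γ B) x) with hc | hc
  · -- min is gp (γ A) (γ s) x, so gp (γ A) (γ s) x ≤ gp (γ A) (γ B) x + δ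
    rw [min_eq_left hc] at hyp
    -- unfold everything and finish with linear arithmetic
    simp only [gp] at hyp hbA hbB ⊢
    have e1 : dist (γ A) x = dist x (γ A) := dist_comm _ _
    have e2 : dist (γ s) x = dist x (γ s) := dist_comm _ _
    have e3 : dist (γ B) x = dist x (γ B) := dist_comm _ _
    have e4 : dist (γ B) (γ s) = dist (γ s) (γ B) := dist_comm _ _
    have e5 : dist w x = dist x w := dist_comm _ _
    have e6 : dist (γ B) w = dist w (γ B) := dist_comm _ _
    -- from hyp: dist (γ s) x + dist (γ A) (γ B) ≤ dist (γ B) x + dist (γ A) (γ s) + 2δ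
    linarith [tB]
  · rw [min_eq_right hc.le] at hyp
    simp only [gp] at hyp hbA hbB ⊢
    have e4 : dist (γ B) (γ s) = dist (γ s) (γ B) := dist_comm _ _
    have e6 : dist (γ A) w = dist w (γ A) := dist_comm _ _
    linarith [tA]

lemma gp_comm {X : Type*} [MetricSpace X] (x y z : X) : gp x y z = gp y x z := by
  simp only [gp, dist_comm x y]
  rw [dist_comm y x]
  ring

theorem stmt13 {X : Type*} [MetricSpace X] {δ α : Real} (hδ : 0 < δ) (hα : 0 ≤ α)
    (hX : IsHyp X δ) (hlen : IsLengthLike X) (Y Z : Set X) (x : X)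
    (h : ∀ y ∈ Y, ∀ z ∈ Z, gp y z x ≤ α) :
    ∀ y' ∈ Hull δ Y, ∀ z' ∈ Hull δ Z, gp y' z' x ≤ α + 3 * δ := by
  intro y' hy' z' hz'
  have step1 : ∀ z ∈ Z, gp z y' x ≤ α + 3 * δ / 2 := by
    intro z hz
    have := gp_hull_le hX (Y := Y) (w := z) (x := x) (fun y hy => h y hy z hz) y' hy'
    rwa [gp_comm] at this
  have step2 := gp_hull_le hX (Y := Z) (w := y') (x := x) step1 z' hz'
  rw [gp_comm] at step2
  linarith
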